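/- For f ∈ C_c^∞(ℝ) and λ > 0, the function f_λ = G_λ * f with G_λ(x) = (2√λ)^{-1} e^{-√λ|x|} satisfies (λ - ∂_x²) f_λ = f, together with the bounds λ‖f_λ‖_{L^∞} ≤ ‖f‖_{L^∞} and ‖f_λ'‖_{L^∞} ≤ ‖f‖_{L¹}, and moreover ‖f_λ'' + f‖_{L^∞} → 0 as λ → 0. -/

import Mathlib

open MeasureTheory

noncomputable section

/-- Green's function `G_λ(x) = (2√λ)⁻¹ e^{-√λ|x|}` of the 1-d resolventConv `λ - ∂_x²`. -/
def Gker (lam : ℝ) (x : ℝ) : ℝ := (2 * Real.sqrt lam)⁻¹ * Real.exp (-Real.sqrt lam * |x|)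

/-- `f_λ = G_λ * f`. -/
def resolventConv (f : ℝ → ℝ) (lam : ℝ) (x : ℝ) : ℝ := ∫ y, Gker lam (x - y) * f y

open Real Filter Set
open scoped Convolution Topology

namespace ResolventAux

variable {s lam : ℝ} {f g W : ℝ → ℝ}

lemma gker_cont (lam : ℝ) : Continuous (Gker lam) := by
  unfold Gker; fun_prop

lemma gker_nonneg (lam : ℝ) (x : ℝ) : 0 ≤ Gker lam x := by
  unfold Gker
  have := Real.sqrt_nonneg lam
  positivity

lemma exp_abs_integrable (hs : 0 < s) :
    Integrable (fun x : ℝ => Real.exp (-s * |x|)) := by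
  have hIoi : IntegrableOn (fun x : ℝ => Real.exp (-s * |x|)) (Ioi 0) :=
    (exp_neg_integrableOn_Ioi 0 hs).congr_fun
      (fun x hx => by rw [abs_of_pos hx]) measurableSet_Ioi
  have hIic : IntegrableOn (fun x : ℝ => Real.exp (-s * |x|)) (Iic 0) := by
    rw [← Measure.map_neg_eq_self (volume : Measure ℝ)]
    have m : MeasurableEmbedding fun x : ℝ => -x :=
      (Homeomorph.neg ℝ).measurableEmbedding
    rw [m.integrableOn_map_iff]
    simp_rw [Function.comp_def, abs_neg, neg_preimage, neg_Iic, neg_zero]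
    exact Iff.mpr integrableOn_Ici_iff_integrableOn_Ioi hIoi
  rw [← integrableOn_univ, ← Set.Iic_union_Ioi (a := (0:ℝ))]
  exact hIic.union hIoi

lemma gker_integrable (hl : 0 < lam) : Integrable (Gker lam) := by
  have := (exp_abs_integrable (Real.sqrt_pos.mpr hl)).const_mul (2 * Real.sqrt lam)⁻¹
  exact this

lemma integral_exp_Ioi (hs : 0 < s) :
    ∫ x in Ioi (0:ℝ), Real.exp (-s * x) = 1 / s := by
  have hd : ∀ t ∈ Ioi (0:ℝ),
      HasDerivAt (fun x => -Real.exp (-s * x) / s) (Real.exp (-s * t)) t := by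
    intro t _
    have h1 : HasDerivAt (fun x : ℝ => -s * x) (-s) t := by
      simpa using (hasDerivAt_id t).const_mul (-s)
    have h3 := (h1.exp.neg).div_const s
    exact h3.congr_deriv (by field_simp)
  have hcont : ContinuousWithinAt (fun x => -Real.exp (-s * x) / s) (Ici 0) 0 :=
    (Continuous.continuousWithinAt (by fun_prop))
  have h4 : Tendsto (fun x : ℝ => s * x) atTop atTop :=
    Tendsto.const_mul_atTop hs tendsto_id
  have h5 : Tendsto (fun x : ℝ => -s * x) atTop atBot := by
    have := tendsto_neg_atTop_atBot.comp h4
    simpa [Function.comp_def, neg_mul] using this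
  have htend : Tendsto (fun x => -Real.exp (-s * x) / s) atTop (𝓝 0) := by
    have := (Real.tendsto_exp_atBot.comp h5).neg.div_const s
    simpa using this
  have := integral_Ioi_of_hasDerivAt_of_tendsto hcont hd
    (exp_neg_integrableOn_Ioi 0 hs) htend
  rw [this]
  simp [neg_div]

lemma integral_gker (hl : 0 < lam) : ∫ x, Gker lam x = lam⁻¹ := by
  have hs := Real.sqrt_pos.mpr hl
  have h1 : ∫ x, Gker lam x
      = (2 * Real.sqrt lam)⁻¹ * ∫ x : ℝ, Real.exp (-Real.sqrt lam * |x|) := by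
    simp_rw [Gker]
    exact integral_const_mul _ _
  rw [h1,
    integral_comp_abs (f := fun x => Real.exp (-Real.sqrt lam * x)),
    integral_exp_Ioi hs]
  have h2 : Real.sqrt lam * Real.sqrt lam = lam := Real.mul_self_sqrt hl.le
  field_simp
  nlinarith [h2]

lemma mul_supp_integrable (hs : 0 < s) (hWc : Continuous W) (hW : HasCompactSupport W) :
    Integrable (fun t : ℝ => Real.exp (-s * |t|) * W t) := by
  apply Continuous.integrable_of_hasCompactSupport
  · fun_prop
  · exact hW.mul_left

lemma gker_mul_integrable (hl : 0 < lam) (hWc : Continuous W) (hW : HasCompactSupport W) :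
    Integrable (fun t => Gker lam t * W t) := by
  have := (mul_supp_integrable (Real.sqrt_pos.mpr hl) hWc hW).const_mul
    (2 * Real.sqrt lam)⁻¹
  simpa [Gker, mul_assoc] using this

lemma comp_sub_supp (hW : HasCompactSupport W) (x : ℝ) :
    HasCompactSupport fun t => W (x - t) :=
  hW.comp_homeomorph (Homeomorph.subLeft x)

lemma comp_add_supp (hW : HasCompactSupport W) (x : ℝ) :
    HasCompactSupport fun t => W (x + t) :=
  hW.comp_homeomorph (Homeomorph.addLeft x)

lemma ev_zero_atTop (hh : HasCompactSupport g) : ∀ᶠ t in atTop, g t = 0 := by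
  have h1 : {t : ℝ | g t = 0} ∈ Filter.cocompact ℝ :=
    Filter.mem_cocompact.mpr
      ⟨tsupport g, hh, fun t ht => image_eq_zero_of_notMem_tsupport ht⟩
  rw [cocompact_eq_atBot_atTop, Filter.mem_sup] at h1
  exact h1.2

lemma integral_Ioi_deriv {u u' : ℝ → ℝ} (hu : ∀ t, HasDerivAt u (u' t) t)
    (h0 : ∀ᶠ t in atTop, u t = 0) (hi : IntegrableOn u' (Ioi 0)) :
    ∫ t in Ioi 0, u' t = -u 0 := by
  have ht : Tendsto u atTop (𝓝 0) :=
    tendsto_const_nhds.congr' (h0.mono fun t h => h.symm)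
  have := integral_Ioi_of_hasDerivAt_of_tendsto
    (hu 0).continuousAt.continuousWithinAt (fun t _ => hu t) hi ht
  simpa using this

lemma conv_eq (lam : ℝ) (g : ℝ → ℝ) :
    (Gker lam ⋆[ContinuousLinearMap.mul ℝ ℝ, volume] g)
      = fun x => ∫ t, Gker lam t * g (x - t) := rfl

lemma resolventConv_eq (f : ℝ → ℝ) (lam : ℝ) :
    resolventConv f lam = fun x => ∫ t, Gker lam t * f (x - t) := by
  funext x
  rw [resolventConv, ← integral_sub_left_eq_self
    (fun t => Gker lam t * f (x - t)) volume x]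
  congr 1
  funext y
  simp

lemma deriv_resolventConv (hl : 0 < lam) (hf : ContDiff ℝ (⊤ : ℕ∞) f)
    (hsupp : HasCompactSupport f) :
    deriv (resolventConv f lam) = fun x => ∫ t, Gker lam t * deriv f (x - t) := by
  have h1 : resolventConv f lam
      = (Gker lam ⋆[ContinuousLinearMap.mul ℝ ℝ, volume] f) :=
    (resolventConv_eq f lam).trans (conv_eq lam f).symm
  funext x
  rw [h1, (HasCompactSupport.hasDerivAt_convolution_right
    (ContinuousLinearMap.mul ℝ ℝ) ((gker_integrable hl).locallyIntegrable)
    hsupp (hf.of_le (by simp)) x).deriv]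
  exact congrFun (conv_eq lam (deriv f)) x

lemma deriv2_resolventConv (hl : 0 < lam) (hf : ContDiff ℝ (⊤ : ℕ∞) f)
    (hsupp : HasCompactSupport f) :
    deriv (deriv (resolventConv f lam))
      = fun x => ∫ t, Gker lam t * deriv (deriv f) (x - t) := by
  rw [deriv_resolventConv hl hf hsupp]
  have h1 : (fun x => ∫ t, Gker lam t * deriv f (x - t))
      = (Gker lam ⋆[ContinuousLinearMap.mul ℝ ℝ, volume] deriv f) :=
    (conv_eq lam (deriv f)).symm
  funext x
  rw [h1, (HasCompactSupport.hasDerivAt_convolution_right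
    (ContinuousLinearMap.mul ℝ ℝ) ((gker_integrable hl).locallyIntegrable)
    hsupp.deriv ((((contDiff_infty_iff_deriv.mp (hf.of_le (by simp))).2)).of_le
      (by exact_mod_cast (le_top : (1:ℕ∞) ≤ ⊤))) x).deriv]
  exact congrFun (conv_eq lam (deriv (deriv f))) x

lemma half2 (hs : 0 < s) (hgd : Differentiable ℝ g)
    (hg'd : Differentiable ℝ (deriv g)) (hg''c : Continuous (deriv (deriv g)))
    (hgs : HasCompactSupport g) :
    ∫ t in Ioi 0, Real.exp (-s * t) * (s ^ 2 * g t - deriv (deriv g) t)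
      = deriv g 0 + s * g 0 := by
  set u : ℝ → ℝ := fun t => -(Real.exp (-s * t) * (deriv g t + s * g t)) with hu_def
  have hderiv : ∀ t, HasDerivAt u
      (Real.exp (-s * t) * (s ^ 2 * g t - deriv (deriv g) t)) t := by
    intro t
    have h1 : HasDerivAt (fun t : ℝ => -s * t) (-s) t := by
      simpa using (hasDerivAt_id t).const_mul (-s)
    have he : HasDerivAt (fun t : ℝ => Real.exp (-s * t))
        (Real.exp (-s * t) * (-s)) t := h1.exp
    have hv : HasDerivAt (fun t => deriv g t + s * g t)
        (deriv (deriv g) t + s * deriv g t) t :=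
      ((hg'd t).hasDerivAt).add (((hgd t).hasDerivAt).const_mul s)
    have := (he.mul hv).neg
    exact this.congr_deriv (by ring)
  have h0 : ∀ᶠ t in atTop, u t = 0 := by
    filter_upwards [ev_zero_atTop hgs, ev_zero_atTop hgs.deriv] with t h1 h2
    simp [hu_def, h1, h2]
  have hWc : Continuous fun t => s ^ 2 * g t - deriv (deriv g) t :=
    (continuous_const.mul hgd.continuous).sub hg''c
  have hWs : HasCompactSupport fun t => s ^ 2 * g t - deriv (deriv g) t := by
    exact HasCompactSupport.comp₂_left (hgs.mul_left (f := fun _ => s ^ 2))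
      hgs.deriv.deriv (sub_zero 0)
  have hi : IntegrableOn
      (fun t => Real.exp (-s * t) * (s ^ 2 * g t - deriv (deriv g) t)) (Ioi 0) := by
    refine ((mul_supp_integrable hs hWc hWs).integrableOn).congr_fun
      (fun t ht => by beta_reduce; rw [abs_of_pos ht]) measurableSet_Ioi
  rw [integral_Ioi_deriv hderiv h0 hi]
  simp [hu_def]

lemma half1 (hs : 0 < s) (hgd : Differentiable ℝ g) (hg'c : Continuous (deriv g))
    (hgs : HasCompactSupport g) :
    ∫ t in Ioi 0, Real.exp (-s * t) * deriv g t
      = -g 0 + s * ∫ t in Ioi 0, Real.exp (-s * t) * g t := by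
  set u : ℝ → ℝ := fun t => Real.exp (-s * t) * g t with hu_def
  have hderiv : ∀ t, HasDerivAt u
      (Real.exp (-s * t) * deriv g t - s * (Real.exp (-s * t) * g t)) t := by
    intro t
    have h1 : HasDerivAt (fun t : ℝ => -s * t) (-s) t := by
      simpa using (hasDerivAt_id t).const_mul (-s)
    have he : HasDerivAt (fun t : ℝ => Real.exp (-s * t))
        (Real.exp (-s * t) * (-s)) t := h1.exp
    have := he.mul (hgd t).hasDerivAt
    exact this.congr_deriv (by ring)
  have h0 : ∀ᶠ t in atTop, u t = 0 := by
    filter_upwards [ev_zero_atTop hgs] with t h1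
    simp [hu_def, h1]
  have hi1 : IntegrableOn (fun t => Real.exp (-s * t) * deriv g t) (Ioi 0) :=
    ((mul_supp_integrable hs hg'c hgs.deriv).integrableOn).congr_fun
      (fun t ht => by beta_reduce; rw [abs_of_pos ht]) measurableSet_Ioi
  have hi2 : IntegrableOn (fun t => Real.exp (-s * t) * g t) (Ioi 0) :=
    ((mul_supp_integrable hs hgd.continuous hgs).integrableOn).congr_fun
      (fun t ht => by beta_reduce; rw [abs_of_pos ht]) measurableSet_Ioi
  have := integral_Ioi_deriv hderiv h0 (hi1.sub (hi2.const_mul s))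
  rw [integral_sub hi1 (hi2.const_mul s), integral_const_mul] at this
  have hu0 : u 0 = g 0 := by simp [hu_def]
  rw [hu0] at this
  linarith

lemma hasDerivAt_comp_sub {h : ℝ → ℝ} (hd : Differentiable ℝ h) (x t : ℝ) :
    HasDerivAt (fun t => h (x - t)) (-(deriv h (x - t))) t := by
  have := ((hd (x - t)).hasDerivAt).comp t ((hasDerivAt_id t).const_sub x)
  simpa [Function.comp_def] using this

lemma hasDerivAt_comp_add {h : ℝ → ℝ} (hd : Differentiable ℝ h) (x t : ℝ) :
    HasDerivAt (fun t => h (x + t)) (deriv h (x + t)) t := by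
  have := ((hd (x + t)).hasDerivAt).comp t ((hasDerivAt_id t).const_add x)
  simpa [Function.comp_def] using this

lemma pde (hl : 0 < lam) (hf : ContDiff ℝ (⊤ : ℕ∞) f) (hsupp : HasCompactSupport f) (x : ℝ) :
    lam * (∫ t, Gker lam t * f (x - t))
      - (∫ t, Gker lam t * deriv (deriv f) (x - t)) = f x := by
  have hs : 0 < Real.sqrt lam := Real.sqrt_pos.mpr hl
  set s := Real.sqrt lam with hsdef
  have hss : s ^ 2 = lam := Real.sq_sqrt hl.le
  have h1le : (1 : WithTop ℕ∞) ≤ (⊤ : ℕ∞) := by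
    exact_mod_cast (le_top : (1 : ℕ∞) ≤ ⊤)
  have hfd : Differentiable ℝ f := hf.differentiable (by simp)
  have hf1 : ContDiff ℝ (⊤ : ℕ∞) f := hf.of_le (by simp)
  have hf' : ContDiff ℝ (⊤ : ℕ∞) (deriv f) := (contDiff_infty_iff_deriv.mp hf1).2
  have hf'd : Differentiable ℝ (deriv f) := hf'.differentiable (by simp)
  have hf'' : ContDiff ℝ (⊤ : ℕ∞) (deriv (deriv f)) := (contDiff_infty_iff_deriv.mp hf').2
  have hf''c : Continuous (deriv (deriv f)) := hf''.continuous
  -- the function t ↦ f (x - t)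
  have hgpd : Differentiable ℝ (fun t => f (x - t)) :=
    fun t => ((hasDerivAt_comp_sub hfd x t).differentiableAt)
  have hdgp : deriv (fun t => f (x - t)) = fun t => -(deriv f (x - t)) :=
    funext fun t => (hasDerivAt_comp_sub hfd x t).deriv
  have hd2gp : deriv (deriv (fun t => f (x - t))) = fun t => deriv (deriv f) (x - t) := by
    rw [hdgp]
    funext t
    exact (((hasDerivAt_comp_sub hf'd x t).neg).deriv).trans (neg_neg _)
  have hgp'd : Differentiable ℝ (deriv (fun t => f (x - t))) := by
    rw [hdgp]
    exact fun t => ((hasDerivAt_comp_sub hf'd x t).neg).differentiableAt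
  have hgp''c : Continuous (deriv (deriv (fun t => f (x - t)))) := by
    rw [hd2gp]
    exact hf''c.comp (by fun_prop)
  have hIoi1 : ∫ t in Ioi 0,
      Real.exp (-s * t) * (lam * f (x - t) - deriv (deriv f) (x - t))
        = -(deriv f x) + s * f x := by
    have h2 := half2 hs hgpd hgp'd hgp''c (comp_sub_supp hsupp x)
    rw [hd2gp] at h2
    simp only [hdgp, hss, sub_zero] at h2
    exact h2
  -- the function t ↦ f (x + t)
  have hgmd : Differentiable ℝ (fun t => f (x + t)) :=
    fun t => ((hasDerivAt_comp_add hfd x t).differentiableAt)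
  have hdgm : deriv (fun t => f (x + t)) = fun t => deriv f (x + t) :=
    funext fun t => (hasDerivAt_comp_add hfd x t).deriv
  have hd2gm : deriv (deriv (fun t => f (x + t))) = fun t => deriv (deriv f) (x + t) := by
    rw [hdgm]
    exact funext fun t => (hasDerivAt_comp_add hf'd x t).deriv
  have hgm'd : Differentiable ℝ (deriv (fun t => f (x + t))) := by
    rw [hdgm]
    exact fun t => ((hasDerivAt_comp_add hf'd x t).differentiableAt)
  have hgm''c : Continuous (deriv (deriv (fun t => f (x + t)))) := by
    rw [hd2gm]
    exact hf''c.comp (by fun_prop)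
  have hIoi2 : ∫ t in Ioi 0,
      Real.exp (-s * t) * (lam * f (x + t) - deriv (deriv f) (x + t))
        = deriv f x + s * f x := by
    have h2 := half2 hs hgmd hgm'd hgm''c (comp_add_supp hsupp x)
    rw [hd2gm] at h2
    simp only [hdgm, hss, add_zero] at h2
    exact h2
  -- rewrite the two half-line integrals of the Gker-integrand
  have hIoiG : ∫ t in Ioi 0,
      Gker lam t * (lam * f (x - t) - deriv (deriv f) (x - t))
        = (2 * s)⁻¹ * (-(deriv f x) + s * f x) := by
    rw [← hIoi1, ← integral_const_mul]
    refine setIntegral_congr_fun measurableSet_Ioi (fun t ht => ?_)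
    rw [Gker, abs_of_pos ht]
    ring
  have hIicG : ∫ t in Iic 0,
      Gker lam t * (lam * f (x - t) - deriv (deriv f) (x - t))
        = (2 * s)⁻¹ * (deriv f x + s * f x) := by
    have hneg := integral_comp_neg_Ioi 0
      (fun t => Gker lam t * (lam * f (x - t) - deriv (deriv f) (x - t)))
    rw [neg_zero] at hneg
    rw [← hneg, ← hIoi2, ← integral_const_mul]
    refine setIntegral_congr_fun measurableSet_Ioi (fun t ht => ?_)
    rw [Gker, abs_neg, abs_of_pos ht, sub_neg_eq_add]
    ring
  -- integrability
  have hWc : Continuous (fun y => lam * f y - deriv (deriv f) y) :=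
    (continuous_const.mul hf.continuous).sub hf''c
  have hWs : HasCompactSupport (fun y => lam * f y - deriv (deriv f) y) :=
    HasCompactSupport.comp₂_left (hsupp.mul_left (f := fun _ => lam))
      hsupp.deriv.deriv (sub_zero 0)
  have hint : Integrable
      (fun t => Gker lam t * (lam * f (x - t) - deriv (deriv f) (x - t))) :=
    gker_mul_integrable hl (hWc.comp (by fun_prop)) (comp_sub_supp hWs x)
  have hint1 : Integrable (fun t => Gker lam t * f (x - t)) :=
    gker_mul_integrable hl (hf.continuous.comp (by fun_prop)) (comp_sub_supp hsupp x)
  have hint2 : Integrable (fun t => Gker lam t * deriv (deriv f) (x - t)) :=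
    gker_mul_integrable hl (hf''c.comp (by fun_prop))
      (comp_sub_supp hsupp.deriv.deriv x)
  have hsplit := intervalIntegral.integral_Iic_add_Ioi (b := (0:ℝ))
    (hint.integrableOn) (hint.integrableOn)
  have hcomb : lam * (∫ t, Gker lam t * f (x - t))
      - (∫ t, Gker lam t * deriv (deriv f) (x - t))
      = ∫ t, Gker lam t * (lam * f (x - t) - deriv (deriv f) (x - t)) := by
    rw [← integral_const_mul, ← integral_sub (hint1.const_mul lam) hint2]
    congr 1
    funext t
    ring
  rw [hcomb, ← hsplit, hIoiG, hIicG]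
  field_simp
  ring

lemma gker_le (lam t : ℝ) : Gker lam t ≤ (2 * Real.sqrt lam)⁻¹ := by
  rw [Gker]
  have h1 : Real.exp (-Real.sqrt lam * |t|) ≤ 1 :=
    Real.exp_le_one_iff.mpr (by
      have := Real.sqrt_nonneg lam
      have := abs_nonneg t
      nlinarith)
  have h2 : (0:ℝ) ≤ (2 * Real.sqrt lam)⁻¹ := by
    have := Real.sqrt_nonneg lam
    positivity
  exact mul_le_of_le_one_right h2 h1

lemma bound_sup (hl : 0 < lam) (hfc : Continuous f) (hsupp : HasCompactSupport f)
    (x : ℝ) : lam * |∫ t, Gker lam t * f (x - t)| ≤ ⨆ y, |f y| := by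
  obtain ⟨x₀, hx₀⟩ := (hfc.abs).exists_forall_ge_of_hasCompactSupport hsupp.abs
  have hbdd : BddAbove (range fun y => |f y|) :=
    ⟨|f x₀|, by rintro - ⟨y, rfl⟩; exact hx₀ y⟩
  have hM : ∀ y, |f y| ≤ ⨆ y, |f y| := fun y => le_ciSup hbdd y
  have hMnn : 0 ≤ ⨆ y, |f y| := le_trans (abs_nonneg _) (hM 0)
  have hint : Integrable (fun t => Gker lam t * f (x - t)) :=
    gker_mul_integrable hl (hfc.comp (by fun_prop)) (comp_sub_supp hsupp x)
  have h1 : |∫ t, Gker lam t * f (x - t)| ≤ lam⁻¹ * ⨆ y, |f y| := by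
    calc |∫ t, Gker lam t * f (x - t)|
        ≤ ∫ t, ‖Gker lam t * f (x - t)‖ := by
          simpa [Real.norm_eq_abs] using
            norm_integral_le_integral_norm (fun t => Gker lam t * f (x - t))
      _ ≤ ∫ t, Gker lam t * ⨆ y, |f y| := by
          refine integral_mono hint.norm ((gker_integrable hl).mul_const _) (fun t => ?_)
          rw [Real.norm_eq_abs, abs_mul, abs_of_nonneg (gker_nonneg _ _)]
          exact mul_le_mul_of_nonneg_left (hM _) (gker_nonneg _ _)
      _ = lam⁻¹ * ⨆ y, |f y| := by
          rw [integral_mul_const, integral_gker hl]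
  calc lam * |∫ t, Gker lam t * f (x - t)|
      ≤ lam * (lam⁻¹ * ⨆ y, |f y|) := mul_le_mul_of_nonneg_left h1 hl.le
    _ = ⨆ y, |f y| := by field_simp

lemma bound_linfty (hl : 0 < lam) (hfc : Continuous f) (hsupp : HasCompactSupport f)
    (x : ℝ) :
    |∫ t, Gker lam t * f (x - t)| ≤ (2 * Real.sqrt lam)⁻¹ * ∫ y, |f y| := by
  have hint : Integrable (fun t => Gker lam t * f (x - t)) :=
    gker_mul_integrable hl (hfc.comp (by fun_prop)) (comp_sub_supp hsupp x)
  have habs : Integrable (fun t => |f (x - t)|) :=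
    Continuous.integrable_of_hasCompactSupport (by fun_prop)
      ((comp_sub_supp hsupp x).abs)
  calc |∫ t, Gker lam t * f (x - t)|
      ≤ ∫ t, ‖Gker lam t * f (x - t)‖ := by
        simpa [Real.norm_eq_abs] using
          norm_integral_le_integral_norm (fun t => Gker lam t * f (x - t))
    _ ≤ ∫ t, (2 * Real.sqrt lam)⁻¹ * |f (x - t)| := by
        refine integral_mono hint.norm (habs.const_mul _) (fun t => ?_)
        rw [Real.norm_eq_abs, abs_mul, abs_of_nonneg (gker_nonneg _ _)]
        exact mul_le_mul_of_nonneg_right (gker_le lam t) (abs_nonneg _)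
    _ = (2 * Real.sqrt lam)⁻¹ * ∫ t, |f (x - t)| := integral_const_mul _ _
    _ = (2 * Real.sqrt lam)⁻¹ * ∫ y, |f y| := by
        rw [integral_sub_left_eq_self (fun y => |f y|) volume x]

lemma bound_deriv (hl : 0 < lam) (hf : ContDiff ℝ (⊤ : ℕ∞) f) (hsupp : HasCompactSupport f)
    (x : ℝ) : |∫ t, Gker lam t * deriv f (x - t)| ≤ ∫ y, |f y| := by
  have hs : 0 < Real.sqrt lam := Real.sqrt_pos.mpr hl
  set s := Real.sqrt lam with hsdef
  have hfd : Differentiable ℝ f := hf.differentiable (by simp)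
  have hfc : Continuous f := hf.continuous
  have hf'c : Continuous (deriv f) :=
    ((contDiff_infty_iff_deriv.mp (hf.of_le (by simp))).2).continuous
  have hgpd : Differentiable ℝ (fun t => f (x - t)) :=
    fun t => ((hasDerivAt_comp_sub hfd x t).differentiableAt)
  have hdgp : deriv (fun t => f (x - t)) = fun t => -(deriv f (x - t)) :=
    funext fun t => (hasDerivAt_comp_sub hfd x t).deriv
  have hA := half1 hs hgpd (by rw [hdgp]; exact (hf'c.comp (by fun_prop)).neg)
    (comp_sub_supp hsupp x)
  rw [hdgp] at hA
  simp only [mul_neg, integral_neg, sub_zero] at hA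
  have hgmd : Differentiable ℝ (fun t => f (x + t)) :=
    fun t => ((hasDerivAt_comp_add hfd x t).differentiableAt)
  have hdgm : deriv (fun t => f (x + t)) = fun t => deriv f (x + t) :=
    funext fun t => (hasDerivAt_comp_add hfd x t).deriv
  have hB := half1 hs hgmd (by rw [hdgm]; exact hf'c.comp (by fun_prop))
    (comp_add_supp hsupp x)
  rw [hdgm] at hB
  simp only [add_zero] at hB
  set Im := ∫ t in Ioi 0, Real.exp (-s * t) * f (x - t) with hIm
  set Ip := ∫ t in Ioi 0, Real.exp (-s * t) * f (x + t) with hIp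
  have hIoiG : ∫ t in Ioi 0, Gker lam t * deriv f (x - t)
      = (2 * s)⁻¹ * (f x - s * Im) := by
    have h1 : ∫ t in Ioi 0, Gker lam t * deriv f (x - t)
        = (2 * s)⁻¹ * ∫ t in Ioi 0, Real.exp (-s * t) * deriv f (x - t) := by
      rw [← integral_const_mul]
      refine setIntegral_congr_fun measurableSet_Ioi (fun t ht => ?_)
      rw [Gker, abs_of_pos ht]
      ring
    rw [h1]
    have h2 : ∫ t in Ioi 0, Real.exp (-s * t) * deriv f (x - t)
        = f x - s * Im := by linarith
    rw [h2]
  have hIicG : ∫ t in Iic 0, Gker lam t * deriv f (x - t)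
      = (2 * s)⁻¹ * (-(f x) + s * Ip) := by
    have hneg := integral_comp_neg_Ioi 0 (fun t => Gker lam t * deriv f (x - t))
    rw [neg_zero] at hneg
    rw [← hneg]
    have h1 : ∫ t in Ioi 0, Gker lam (-t) * deriv f (x - -t)
        = (2 * s)⁻¹ * ∫ t in Ioi 0, Real.exp (-s * t) * deriv f (x + t) := by
      rw [← integral_const_mul]
      refine setIntegral_congr_fun measurableSet_Ioi (fun t ht => ?_)
      rw [Gker, abs_neg, abs_of_pos ht, sub_neg_eq_add]
      ring
    rw [h1, hB]
  have hint : Integrable (fun t => Gker lam t * deriv f (x - t)) :=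
    gker_mul_integrable hl (hf'c.comp (by fun_prop)) (comp_sub_supp hsupp.deriv x)
  have hsplit := intervalIntegral.integral_Iic_add_Ioi (b := (0:ℝ))
    (hint.integrableOn) (hint.integrableOn)
  have htotal : ∫ t, Gker lam t * deriv f (x - t) = 2⁻¹ * (Ip - Im) := by
    rw [← hsplit, hIicG, hIoiG]
    field_simp
    ring
  rw [htotal]
  -- now estimate
  have habs : Integrable (fun t => |f (x - t)|) :=
    Continuous.integrable_of_hasCompactSupport (by fun_prop)
      ((comp_sub_supp hsupp x).abs)
  have heIm : Integrable (fun t => Real.exp (-s * |t|) * f (x - t)) :=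
    mul_supp_integrable hs (hfc.comp (by fun_prop)) (comp_sub_supp hsupp x)
  have hIm_int : IntegrableOn (fun t => Real.exp (-s * t) * f (x - t)) (Ioi 0) :=
    heIm.integrableOn.congr_fun (fun t ht => by beta_reduce; rw [abs_of_pos ht]) measurableSet_Ioi
  have heIp : Integrable (fun t => Real.exp (-s * |t|) * f (x + t)) :=
    mul_supp_integrable hs (hfc.comp (by fun_prop)) (comp_add_supp hsupp x)
  have hIp_int : IntegrableOn (fun t => Real.exp (-s * t) * f (x + t)) (Ioi 0) :=
    heIp.integrableOn.congr_fun (fun t ht => by beta_reduce; rw [abs_of_pos ht]) measurableSet_Ioi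
  have habs' : Integrable (fun t => |f (x + t)|) :=
    Continuous.integrable_of_hasCompactSupport (by fun_prop)
      ((comp_add_supp hsupp x).abs)
  have hImb : |Im| ≤ ∫ t in Ioi 0, |f (x - t)| := by
    calc |Im| ≤ ∫ t in Ioi 0, |Real.exp (-s * t) * f (x - t)| := by
          simpa only [Real.norm_eq_abs] using norm_integral_le_integral_norm
            (μ := volume.restrict (Ioi 0)) (fun t => Real.exp (-s * t) * f (x - t))
      _ ≤ ∫ t in Ioi 0, |f (x - t)| := by
          refine setIntegral_mono_on hIm_int.abs habs.integrableOn
            measurableSet_Ioi (fun t ht => ?_)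
          rw [abs_mul, abs_of_pos (Real.exp_pos _)]
          refine mul_le_of_le_one_left (abs_nonneg _) ?_
          refine Real.exp_le_one_iff.mpr ?_
          have ht' : (0:ℝ) < t := ht
          nlinarith
  have hIpb : |Ip| ≤ ∫ t in Ioi 0, |f (x + t)| := by
    calc |Ip| ≤ ∫ t in Ioi 0, |Real.exp (-s * t) * f (x + t)| := by
          simpa only [Real.norm_eq_abs] using norm_integral_le_integral_norm
            (μ := volume.restrict (Ioi 0)) (fun t => Real.exp (-s * t) * f (x + t))
      _ ≤ ∫ t in Ioi 0, |f (x + t)| := by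
          refine setIntegral_mono_on hIp_int.abs habs'.integrableOn
            measurableSet_Ioi (fun t ht => ?_)
          rw [abs_mul, abs_of_pos (Real.exp_pos _)]
          refine mul_le_of_le_one_left (abs_nonneg _) ?_
          refine Real.exp_le_one_iff.mpr ?_
          have ht' : (0:ℝ) < t := ht
          nlinarith
  have hswap : ∫ t in Ioi 0, |f (x + t)| = ∫ t in Iic 0, |f (x - t)| := by
    have h := integral_comp_neg_Ioi 0 (fun t => |f (x - t)|)
    rw [neg_zero] at h
    rw [← h]
    exact setIntegral_congr_fun measurableSet_Ioi
      (fun t ht => by rw [sub_neg_eq_add])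
  have hsum : (∫ t in Iic 0, |f (x - t)|) + ∫ t in Ioi 0, |f (x - t)|
      = ∫ t, |f (x - t)| :=
    intervalIntegral.integral_Iic_add_Ioi habs.integrableOn habs.integrableOn
  have hfull : ∫ t, |f (x - t)| = ∫ y, |f y| :=
    integral_sub_left_eq_self (fun y => |f y|) volume x
  have h0 : 0 ≤ ∫ y, |f y| := integral_nonneg (fun y => abs_nonneg _)
  have habs2 : |Ip - Im| ≤ |Ip| + |Im| := abs_sub _ _
  have h3 : |2⁻¹ * (Ip - Im)| = 2⁻¹ * |Ip - Im| := by
    rw [abs_mul]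
    norm_num
  rw [h3]
  linarith

end ResolventAux

/-- for `f ∈ C_c^∞(ℝ)` and `λ > 0`, `f_λ = G_λ * f` satisfies
`(λ - ∂_x²) f_λ = f`, `λ‖f_λ‖_∞ ≤ ‖f‖_∞`, `‖f_λ'‖_∞ ≤ ‖f‖_{L¹}`, and
`‖f_λ'' + f‖_∞ → 0` as `λ → 0⁺`. -/
theorem resolvent_properties (f : ℝ → ℝ) (hf : ContDiff ℝ (⊤ : ℕ∞) f)
    (hsupp : HasCompactSupport f) :
    (∀ lam : ℝ, 0 < lam →
      (∀ x, lam * resolventConv f lam x - deriv (deriv (resolventConv f lam)) x = f x) ∧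
      (∀ x, lam * |resolventConv f lam x| ≤ ⨆ y, |f y|) ∧
      (∀ x, |deriv (resolventConv f lam) x| ≤ ∫ y, |f y|)) ∧
    Filter.Tendsto (fun lam => ⨆ x, |deriv (deriv (resolventConv f lam)) x + f x|)
      (nhdsWithin 0 (Set.Ioi 0)) (nhds 0) := by
  constructor
  · intro lam hl
    refine ⟨fun x => ?_, fun x => ?_, fun x => ?_⟩
    · simp only [ResolventAux.deriv2_resolventConv hl hf hsupp]
      simp only [ResolventAux.resolventConv_eq f lam]
      exact ResolventAux.pde hl hf hsupp x
    · simp only [ResolventAux.resolventConv_eq f lam]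
      exact ResolventAux.bound_sup hl hf.continuous hsupp x
    · simp only [ResolventAux.deriv_resolventConv hl hf hsupp]
      exact ResolventAux.bound_deriv hl hf hsupp x
  · set I := ∫ y, |f y| with hI
    have key : ∀ lam : ℝ, lam ∈ Ioi (0:ℝ) → ∀ x : ℝ,
        |deriv (deriv (resolventConv f lam)) x + f x| ≤ Real.sqrt lam / 2 * I := by
      intro lam hl x
      have hl' : (0:ℝ) < lam := hl
      have hpde := ResolventAux.pde hl' hf hsupp x
      have hg2 : deriv (deriv (resolventConv f lam)) x
          = ∫ t, Gker lam t * deriv (deriv f) (x - t) := by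
        simp only [ResolventAux.deriv2_resolventConv hl' hf hsupp]
      have heq : deriv (deriv (resolventConv f lam)) x + f x
          = lam * ∫ t, Gker lam t * f (x - t) := by
        rw [hg2]; linarith
      rw [heq, abs_mul, abs_of_pos hl']
      have hb := ResolventAux.bound_linfty hl' hf.continuous hsupp x
      calc lam * |∫ t, Gker lam t * f (x - t)|
          ≤ lam * ((2 * Real.sqrt lam)⁻¹ * I) := mul_le_mul_of_nonneg_left hb hl'.le
        _ = Real.sqrt lam / 2 * I := by
            have hs : 0 < Real.sqrt lam := Real.sqrt_pos.mpr hl'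
            field_simp
            rw [Real.sq_sqrt hl'.le]
    have hub : ∀ lam ∈ Ioi (0:ℝ),
        (⨆ x, |deriv (deriv (resolventConv f lam)) x + f x|) ≤ Real.sqrt lam / 2 * I :=
      fun lam hl => ciSup_le (key lam hl)
    have hlb : ∀ lam ∈ Ioi (0:ℝ),
        0 ≤ ⨆ x, |deriv (deriv (resolventConv f lam)) x + f x| := by
      intro lam hl
      have hbdd : BddAbove (range fun x => |deriv (deriv (resolventConv f lam)) x + f x|) :=
        ⟨Real.sqrt lam / 2 * I, by rintro - ⟨x, rfl⟩; exact key lam hl x⟩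
      exact le_trans (abs_nonneg _) (le_ciSup hbdd 0)
    have htend : Tendsto (fun lam => Real.sqrt lam / 2 * I)
        (nhdsWithin 0 (Set.Ioi 0)) (nhds 0) := by
      have h1 : Tendsto Real.sqrt (nhdsWithin 0 (Set.Ioi 0)) (nhds 0) :=
        ((Real.continuous_sqrt.tendsto' 0 0 (by simp)).mono_left nhdsWithin_le_nhds)
      have := (h1.div_const 2).mul_const I
      simpa using this
    exact squeeze_zero' (eventually_nhdsWithin_of_forall hlb)
      (eventually_nhdsWithin_of_forall hub) htend

end
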